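/- In the data center model, suppose that for all policies d and all j = 1,...,m, G^{(d)}(n,j) + c ≤ 0. Then for each fixed j, the long-run average profit η^{d} is (weakly) decreasing in the decision element d_{n,j} on {0,1,...,j}: if d' agrees with d except d'_{n,j} > d_{n,j} with both in {0,...,j}, then η^{d'} ≤ η^{d}. -/

import Mathlib

/-! Write `G^{(d)}(n,j) = g(n+j-1) - g(n+j)` for the solution `g` of the Poisson equation of
policy `d`. By the performance difference formula,
`η^{d'} - η^{d} = Σ_k π^{(d')}(k) [(f' - f)(k) + ((B' - B) g)(k)]`. Changing only `d_{n,j}` (within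
`{0,…,j}`, where the `min` in the death rate is inactive) alters only row `n+j` of the generator,
whose death rate grows by `(d'_{n,j} - d_{n,j}) μ2`, and the reward in state `n+j`, which grows by
the same amount times `c`. The sum collapses to
`μ2 π^{(d')}(n+j) (d'_{n,j} - d_{n,j}) (G^{(d)}(n,j) + c) ≤ 0`. -/

open Finset

/-- Death rate of the data-center birth-death chain at state index `k`
(states `0..n` are `(k,0)`; states `n+1..n+m` are `(n, k-n)`). -/
noncomputable def dcDeath (n : ℕ) (μ1 μ2 : ℝ) (d : ℕ → ℕ) (k : ℕ) : ℝ :=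
  if k ≤ n then (k : ℝ) * μ1
  else (n : ℝ) * μ1 + (min (d (k - n)) (k - n) : ℝ) * μ2

/-- Policy-dependent generator of the data-center birth-death chain. -/
noncomputable def dcGen (n m : ℕ) (lam μ1 μ2 : ℝ) (d : ℕ → ℕ) (k l : ℕ) : ℝ :=
  if l = k + 1 then lam
  else if l + 1 = k then dcDeath n μ1 μ2 d k
  else if l = k then -((if k < n + m then lam else 0) + dcDeath n μ1 μ2 d k)
  else 0

/-- `π` is a stationary probability vector for the policy-`d` chain. -/
def dcStationary (n m : ℕ) (lam μ1 μ2 : ℝ) (d : ℕ → ℕ) (π : ℕ → ℝ) : Prop :=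
  (∀ l ∈ Finset.range (n + m + 1),
    ∑ k ∈ Finset.range (n + m + 1), π k * dcGen n m lam μ1 μ2 d k l = 0) ∧
  (∑ k ∈ Finset.range (n + m + 1), π k = 1) ∧
  (∀ k ∈ Finset.range (n + m + 1), 0 ≤ π k)

/-- Reward (profit rate) function of the data center at state index `k`. -/
noncomputable def dcReward (n m : ℕ) (lam μ1 μ2 R P1W P2W P2S C1 C21 C22 C3 C4 : ℝ)
    (d : ℕ → ℕ) (k : ℕ) : ℝ :=
  if k ≤ n then
    R * ((k : ℝ) * μ1) - ((n : ℝ) * P1W + (m : ℝ) * P2S) * C1 - (k : ℝ) * C21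
  else
    R * ((n : ℝ) * μ1 + (min (k - n) (d (k - n)) : ℝ) * μ2)
      - ((n : ℝ) * P1W + (d (k - n) : ℝ) * P2W + ((m : ℝ) - (d (k - n) : ℝ)) * P2S) * C1
      - ((n : ℝ) * C21 + ((k - n : ℕ) : ℝ) * C22)
      - (n : ℝ) * μ1 * C3
      - (if k - n = m then lam * C4 else 0)

/-- `g` solves the Poisson equation `B^{(d)} g = η e - f` for the policy-`d` chain. -/
def dcPoisson (n m : ℕ) (lam μ1 μ2 : ℝ) (d : ℕ → ℕ) (f : ℕ → ℝ) (η : ℝ)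
    (g : ℕ → ℝ) : Prop :=
  ∀ k ∈ Finset.range (n + m + 1),
    ∑ l ∈ Finset.range (n + m + 1), dcGen n m lam μ1 μ2 d k l * g l = η - f k

theorem performance_difference {N : ℕ} {p' f f' g : ℕ → ℝ} {B B' : ℕ → ℕ → ℝ} {η η' : ℝ}
    (hp' : ∀ l ∈ range N, ∑ k ∈ range N, p' k * B' k l = 0)
    (hp'_sum : ∑ k ∈ range N, p' k = 1)
    (hg : ∀ k ∈ range N, ∑ l ∈ range N, B k l * g l = η - f k)
    (hη' : η' = ∑ k ∈ range N, p' k * f' k) :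
    η' - η = ∑ k ∈ range N,
      p' k * ((f' k - f k) + ∑ l ∈ range N, (B' k l - B k l) * g l) := by
  have hB' : ∑ k ∈ range N, p' k * ∑ l ∈ range N, B' k l * g l = 0 := by
    simp_rw [mul_sum, ← mul_assoc]
    rw [sum_comm]
    exact sum_eq_zero fun l hl => by rw [← sum_mul, hp' l hl, zero_mul]
  have hB : ∑ k ∈ range N, p' k * ∑ l ∈ range N, B k l * g l
      = η - ∑ k ∈ range N, p' k * f k := by
    rw [sum_congr rfl fun k hk => by rw [hg k hk]]
    simp_rw [mul_sub]
    rw [sum_sub_distrib, ← sum_mul, hp'_sum, one_mul]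
  simp_rw [sub_mul, sum_sub_distrib, mul_add, mul_sub, sum_add_distrib, sum_sub_distrib,
    hB', hB, hη']
  ring

section DataCenter

variable {n m : ℕ} {lam μ1 μ2 : ℝ} {d d' : ℕ → ℕ} {j0 k : ℕ}

theorem dcDeath_congr (hdd' : ∀ j, j ≠ j0 → d j = d' j) (hk : k ≠ n + j0) :
    dcDeath n μ1 μ2 d k = dcDeath n μ1 μ2 d' k := by
  unfold dcDeath
  by_cases hkn : k ≤ n
  · simp only [if_pos hkn]
  · rw [hdd' (k - n) (by omega)]

theorem dcGen_congr (hdd' : ∀ j, j ≠ j0 → d j = d' j) (hk : k ≠ n + j0) (l : ℕ) :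
    dcGen n m lam μ1 μ2 d k l = dcGen n m lam μ1 μ2 d' k l := by
  simp only [dcGen, dcDeath_congr hdd' hk]

theorem dcReward_congr {R P1W P2W P2S C1 C21 C22 C3 C4 : ℝ}
    (hdd' : ∀ j, j ≠ j0 → d j = d' j) (hk : k ≠ n + j0) :
    dcReward n m lam μ1 μ2 R P1W P2W P2S C1 C21 C22 C3 C4 d k =
      dcReward n m lam μ1 μ2 R P1W P2W P2S C1 C21 C22 C3 C4 d' k := by
  unfold dcReward
  by_cases hkn : k ≤ n
  · simp only [if_pos hkn]
  · rw [hdd' (k - n) (by omega)]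

theorem dcDeath_add {j : ℕ} (hj : 1 ≤ j) (hdj : d j ≤ j) :
    dcDeath n μ1 μ2 d (n + j) = n * μ1 + d j * μ2 := by
  rw [dcDeath, if_neg (by omega), Nat.add_sub_cancel_left, Nat.cast_add, add_sub_cancel_left,
    min_eq_left (Nat.cast_le.2 hdj)]

theorem dcReward_add_sub {R P1W P2W P2S C1 C21 C22 C3 C4 : ℝ} {j : ℕ} (hj : 1 ≤ j)
    (hdj : d j ≤ j) (hd'j : d' j ≤ j) :
    dcReward n m lam μ1 μ2 R P1W P2W P2S C1 C21 C22 C3 C4 d' (n + j)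
      - dcReward n m lam μ1 μ2 R P1W P2W P2S C1 C21 C22 C3 C4 d (n + j)
      = (d' j - d j) * (R * μ2 - (P2W - P2S) * C1) := by
  simp only [dcReward, if_neg (show ¬ n + j ≤ n by omega), Nat.add_sub_cancel_left,
    Nat.cast_add, add_sub_cancel_left, min_eq_right (Nat.cast_le.2 hdj),
    min_eq_right (Nat.cast_le.2 hd'j)]
  ring

theorem sum_dcGen_sub_mul (g : ℕ → ℝ) (hk : 1 ≤ k) (hkN : k < n + m + 1) :
    ∑ l ∈ range (n + m + 1), (dcGen n m lam μ1 μ2 d' k l - dcGen n m lam μ1 μ2 d k l) * g l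
      = (dcDeath n μ1 μ2 d' k - dcDeath n μ1 μ2 d k) * (g (k - 1) - g k) := by
  set δ := dcDeath n μ1 μ2 d' k - dcDeath n μ1 μ2 d k
  have hrow : ∀ l, (dcGen n m lam μ1 μ2 d' k l - dcGen n m lam μ1 μ2 d k l) * g l
      = (if l = k - 1 then δ * g l else 0) - (if l = k then δ * g l else 0) := by
    intro l
    unfold dcGen
    split_ifs <;> first | omega | ring
  rw [sum_congr rfl fun l _ => hrow l, sum_sub_distrib, sum_ite_eq', sum_ite_eq',
    if_pos (mem_range.2 (by omega)), if_pos (mem_range.2 hkN)]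
  ring

theorem dcPerformance_difference {R P1W P2W P2S C1 C21 C22 C3 C4 c η η' : ℝ} {p' g : ℕ → ℝ}
    (hμ2 : μ2 ≠ 0) (hc : c = R - (P2W - P2S) * C1 / μ2)
    (hdd' : ∀ j, j ≠ j0 → d j = d' j) (hj0 : 1 ≤ j0) (hj0m : j0 ≤ m)
    (hdj0 : d j0 ≤ j0) (hd'j0 : d' j0 ≤ j0)
    (hp' : dcStationary n m lam μ1 μ2 d' p')
    (hg : dcPoisson n m lam μ1 μ2 d
      (dcReward n m lam μ1 μ2 R P1W P2W P2S C1 C21 C22 C3 C4 d) η g)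
    (hη' : η' = ∑ k ∈ range (n + m + 1),
      p' k * dcReward n m lam μ1 μ2 R P1W P2W P2S C1 C21 C22 C3 C4 d' k) :
    η' - η = μ2 * p' (n + j0) * (d' j0 - d j0) * (g (n + j0 - 1) - g (n + j0) + c) := by
  rw [performance_difference hp'.1 hp'.2.1 hg hη', sum_eq_single (n + j0)]
  · rw [dcReward_add_sub hj0 hdj0 hd'j0, sum_dcGen_sub_mul g (by omega) (by omega),
      dcDeath_add hj0 hd'j0, dcDeath_add hj0 hdj0, hc]
    field_simp
    ring
  · intro k _ hk
    rw [dcReward_congr hdd' hk, sub_self, zero_add,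
      sum_eq_zero fun l _ => by rw [dcGen_congr hdd' hk, sub_self, zero_mul], mul_zero]
  · exact fun h => (h (mem_range.2 (by omega))).elim

end DataCenter

theorem stmt9_general (n m : ℕ)
    (lam μ1 μ2 R P1W P2W P2S C1 C21 C22 C3 C4 : ℝ)
    (hμ2 : 0 < μ2)
    (π : (ℕ → ℕ) → ℕ → ℝ)
    (hπ : ∀ d : ℕ → ℕ, (∀ j, d j ≤ m) → dcStationary n m lam μ1 μ2 d (π d))
    (η : (ℕ → ℕ) → ℝ)
    (hη : ∀ d : ℕ → ℕ, η d = ∑ k ∈ Finset.range (n + m + 1),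
      π d k * dcReward n m lam μ1 μ2 R P1W P2W P2S C1 C21 C22 C3 C4 d k)
    (g : (ℕ → ℕ) → ℕ → ℝ)
    (hg : ∀ d : ℕ → ℕ, (∀ j, d j ≤ m) → dcPoisson n m lam μ1 μ2 d
      (dcReward n m lam μ1 μ2 R P1W P2W P2S C1 C21 C22 C3 C4 d) (η d) (g d))
    (c : ℝ) (hc : c = R - (P2W - P2S) * C1 / μ2)
    (hsign : ∀ d : ℕ → ℕ, (∀ j, d j ≤ m) → ∀ j, 1 ≤ j → j ≤ m →
      (g d (n + j - 1) - g d (n + j)) + c ≤ 0) :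
    ∀ (j0 : ℕ), 1 ≤ j0 → j0 ≤ m →
    ∀ d d' : ℕ → ℕ, (∀ j, d j ≤ m) → (∀ j, d' j ≤ m) →
      (∀ j, j ≠ j0 → d j = d' j) →
      d j0 < d' j0 → d' j0 ≤ j0 →
      η d' ≤ η d := by
  intro j0 hj0 hj0m d d' hd hd' hdd' hlt hle
  have hdiff := dcPerformance_difference hμ2.ne' hc hdd' hj0 hj0m (by omega) hle
    (hπ d' hd') (hg d hd) (hη d')
  have hπ_nonneg : 0 ≤ π d' (n + j0) := (hπ d' hd').2.2 _ (mem_range.2 (by omega))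
  have hstep : (0 : ℝ) ≤ d' j0 - d j0 := sub_nonneg.2 (mod_cast hlt.le)
  have hnonpos : η d' - η d ≤ 0 := hdiff ▸ mul_nonpos_of_nonneg_of_nonpos
    (mul_nonneg (mul_nonneg hμ2.le hπ_nonneg) hstep) (hsign d hd j0 hj0 hj0m)
  linarith

/-- if `G^{(d)}(n,j) + c ≤ 0` for all policies `d` and all
`j = 1,...,m`, then the long-run average profit is weakly decreasing in each
decision element `d_{n,j}` on `{0,...,j}`. -/
theorem stmt9 (n m : ℕ) (hn : 1 ≤ n) (hm : 1 ≤ m)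
    (lam μ1 μ2 R P1W P2W P2S C1 C21 C22 C3 C4 : ℝ)
    (hlam : 0 < lam) (hμ1 : 0 < μ1) (hμ2 : 0 < μ2)
    (hP2S : 0 < P2S) (hP : P2S < P2W) (hC1 : 0 < C1)
    (π : (ℕ → ℕ) → ℕ → ℝ)
    (hπ : ∀ d : ℕ → ℕ, (∀ j, d j ≤ m) → dcStationary n m lam μ1 μ2 d (π d))
    (η : (ℕ → ℕ) → ℝ)
    (hη : ∀ d : ℕ → ℕ, η d = ∑ k ∈ Finset.range (n + m + 1),
      π d k * dcReward n m lam μ1 μ2 R P1W P2W P2S C1 C21 C22 C3 C4 d k)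
    (g : (ℕ → ℕ) → ℕ → ℝ)
    (hg : ∀ d : ℕ → ℕ, (∀ j, d j ≤ m) → dcPoisson n m lam μ1 μ2 d
      (dcReward n m lam μ1 μ2 R P1W P2W P2S C1 C21 C22 C3 C4 d) (η d) (g d))
    (c : ℝ) (hc : c = R - (P2W - P2S) * C1 / μ2)
    (hsign : ∀ d : ℕ → ℕ, (∀ j, d j ≤ m) → ∀ j, 1 ≤ j → j ≤ m →
      (g d (n + j - 1) - g d (n + j)) + c ≤ 0) :
    ∀ (j0 : ℕ), 1 ≤ j0 → j0 ≤ m →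
    ∀ d d' : ℕ → ℕ, (∀ j, d j ≤ m) → (∀ j, d' j ≤ m) →
      (∀ j, j ≠ j0 → d j = d' j) →
      d j0 < d' j0 → d' j0 ≤ j0 →
      η d' ≤ η d :=
  stmt9_general n m lam μ1 μ2 R P1W P2W P2S C1 C21 C22 C3 C4 hμ2 π hπ η hη g hg c hc hsign
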